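/- arXiv:1507.01694 — 2 statements merged into one kernel-verified Lean document; each statement's English description precedes it below -/
import Mathlib

section
/- Let H_1, ..., H_N be row vectors in ℝ^N spanning ℝ^N and satisfying ‖H_i‖² < N for each i. Then the operator norm of Φ₀ = ∏_{i=1}^N (I − (1/N)·H_iᵀH_i) satisfies ‖Φ₀‖ < 1. -/
open Matrix
open scoped Matrix.Norms.L2Operator

namespace Stmt10Aux

/-- The factor matrix. -/
noncomputable def A (N : ℕ) (h : Fin N → ℝ) : Matrix (Fin N) (Fin N) ℝ :=
  (1 : Matrix (Fin N) (Fin N) ℝ) - Matrix.of (fun a b => (1 / N : ℝ) * (h a * h b))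

lemma A_mulVec (N : ℕ) (h : Fin N → ℝ) (y : Fin N → ℝ) :
    (A N h) *ᵥ y = fun j => y j - ((1 / N : ℝ) * ∑ b, h b * y b) * h j := by
  funext j
  simp only [A, Matrix.sub_mulVec, Matrix.one_mulVec, Pi.sub_apply]
  congr 1
  simp only [Matrix.mulVec, dotProduct, Matrix.of_apply]
  rw [Finset.mul_sum, Finset.sum_mul]
  refine Finset.sum_congr rfl fun b _ => by ring

lemma step (N : ℕ) (hN : 0 < N) (h : Fin N → ℝ) (hh : ∑ j, (h j) ^ 2 < N) (y : Fin N → ℝ) :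
    ∑ j, (((A N h) *ᵥ y) j) ^ 2 + (1 / N : ℝ) * (∑ b, h b * y b) ^ 2 ≤ ∑ j, (y j) ^ 2 := by
  have hNpos : (0 : ℝ) < N := by exact_mod_cast hN
  set s : ℝ := ∑ b, h b * y b with hs
  set c : ℝ := (1 / N : ℝ) * s with hc
  have hexp : ∑ j, (((A N h) *ᵥ y) j) ^ 2
      = ∑ j, (y j) ^ 2 - 2 * c * s + c ^ 2 * ∑ j, (h j) ^ 2 := by
    rw [A_mulVec, ← hc]
    have : ∀ j : Fin N, (y j - c * h j) ^ 2
        = (y j) ^ 2 - 2 * c * (h j * y j) + c ^ 2 * (h j) ^ 2 := fun j => by ring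
    simp only [this, Finset.sum_add_distrib, Finset.sum_sub_distrib, ← Finset.mul_sum, ← hs]
  rw [hexp, hc]
  have hq : ∑ j, (h j) ^ 2 < N := hh
  have key : (1 / N : ℝ) ^ 2 * s ^ 2 * (∑ j, (h j) ^ 2 - N) ≤ 0 := by
    apply mul_nonpos_of_nonneg_of_nonpos
    · positivity
    · linarith
  have h2 : ((1 / N : ℝ)) ^ 2 * s ^ 2 * N = (1 / N) * s ^ 2 := by field_simp
  nlinarith [key, h2]

/-- Main induction over the list of factors. -/
lemma list_prod_bound (N : ℕ) (hN : 0 < N) (H : Fin N → (Fin N → ℝ))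
    (hnorm : ∀ i, ∑ j, (H i j) ^ 2 < N) (l : List (Fin N)) (x : Fin N → ℝ) :
    (∑ j, (((l.map (fun i => A N (H i))).prod *ᵥ x) j) ^ 2 ≤ ∑ j, (x j) ^ 2) ∧
    (∑ j, (((l.map (fun i => A N (H i))).prod *ᵥ x) j) ^ 2 = ∑ j, (x j) ^ 2 →
      (l.map (fun i => A N (H i))).prod *ᵥ x = x ∧ ∀ i ∈ l, ∑ b, H i b * x b = 0) := by
  induction l with
  | nil =>
    simp [Matrix.one_mulVec]
  | cons i t ih =>
    have hNpos : (0 : ℝ) < N := by exact_mod_cast hN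
    set Q : Matrix (Fin N) (Fin N) ℝ := (t.map (fun i => A N (H i))).prod with hQ
    have hprod : ((i :: t).map (fun i => A N (H i))).prod = A N (H i) * Q := by
      simp [hQ]
    set y : Fin N → ℝ := Q *ᵥ x with hy
    have hPx : ((i :: t).map (fun i => A N (H i))).prod *ᵥ x = (A N (H i)) *ᵥ y := by
      rw [hprod, ← Matrix.mulVec_mulVec]
    have hstep := step N hN (H i) (hnorm i) y
    have hnn : (0:ℝ) ≤ (1 / N : ℝ) * (∑ b, H i b * y b) ^ 2 := by positivity
    obtain ⟨ih1, ih2⟩ := ih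
    constructor
    · rw [hPx]
      linarith
    · intro heq
      rw [hPx] at heq
      have hs0 : (∑ b, H i b * y b) = 0 := by
        have h1 : (1 / N : ℝ) * (∑ b, H i b * y b) ^ 2 ≤ 0 := by linarith
        have h0 : (1 / N : ℝ) * (∑ b, H i b * y b) ^ 2 = 0 := le_antisymm h1 hnn
        have hNne : (N:ℝ) ≠ 0 := ne_of_gt hNpos
        field_simp at h0
        simpa using h0
      have hy2 : ∑ j, (y j) ^ 2 = ∑ j, (x j) ^ 2 := by
        have hA : ∑ j, (((A N (H i)) *ᵥ y) j) ^ 2 ≤ ∑ j, (y j) ^ 2 := by linarith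
        linarith
      obtain ⟨hyx, hrest⟩ := ih2 hy2
      have hyx' : y = x := hyx
      have hsx : (∑ b, H i b * x b) = 0 := by rw [← hyx']; exact hs0
      constructor
      · rw [hPx, hyx', A_mulVec, hsx]
        funext j; simp
      · intro k hk
        rcases List.mem_cons.mp hk with hk | hk
        · rw [hk]; exact hsx
        · exact hrest k hk

end Stmt10Aux

/-- If the row vectors `H_1, ..., H_N` span `ℝ^N` and `‖H_i‖² < N` for each `i`, then the
L2 operator norm of `Φ₀ = ∏_{i=1}^N (I − (1/N)·H_iᵀH_i)` satisfies `‖Φ₀‖ < 1`. -/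
theorem stmt10 (N : ℕ) (hN : 0 < N) (H : Fin N → (Fin N → ℝ))
    (hspan : Submodule.span ℝ (Set.range H) = ⊤)
    (hnorm : ∀ i, ∑ j, (H i j) ^ 2 < N)
    (Φ₀ : Matrix (Fin N) (Fin N) ℝ)
    (hΦ₀ : Φ₀ = ((List.finRange N).map
        (fun i => (1 : Matrix (Fin N) (Fin N) ℝ) -
          Matrix.of (fun a b => (1 / N : ℝ) * (H i a * H i b)))).prod) :
    ‖Φ₀‖ < 1 := by
  classical
  have hΦ₀' : Φ₀ = ((List.finRange N).map (fun i => Stmt10Aux.A N (H i))).prod := hΦ₀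
  -- the CLM on Euclidean space
  set T : EuclideanSpace ℝ (Fin N) →L[ℝ] EuclideanSpace ℝ (Fin N) :=
    Matrix.toEuclideanCLM (𝕜 := ℝ) Φ₀ with hT
  have hnormT : ‖Φ₀‖ = ‖T‖ := rfl
  -- key pointwise strict bound
  have key : ∀ x : EuclideanSpace ℝ (Fin N), ‖x‖ = 1 → ‖T x‖ < 1 := by
    intro x hx
    set x' : Fin N → ℝ := fun j => x j with hx'
    have hTx : ∀ j, (T x) j = (Φ₀ *ᵥ x') j := fun j => rfl
    have hnx : ∑ j, (x' j) ^ 2 = 1 := by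
      have := EuclideanSpace.norm_eq x
      rw [hx] at this
      have h1 : Real.sqrt (∑ j, ‖x j‖ ^ 2) = 1 := this.symm
      have h2 : ∑ j, ‖x j‖ ^ 2 = 1 := by
        have hnn : (0:ℝ) ≤ ∑ j, ‖x j‖ ^ 2 := by positivity
        nlinarith [Real.sq_sqrt hnn]
      simpa [Real.norm_eq_abs, sq_abs] using h2
    obtain ⟨hle, heq⟩ := Stmt10Aux.list_prod_bound N hN H hnorm (List.finRange N) x'
    rw [← hΦ₀'] at hle heq
    have hlt : ∑ j, ((Φ₀ *ᵥ x') j) ^ 2 < ∑ j, (x' j) ^ 2 := by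
      rcases lt_or_eq_of_le hle with h | h
      · exact h
      · exfalso
        obtain ⟨_, hdot⟩ := heq h
        -- all H i are orthogonal to x', so x' = 0 by the span condition
        have hx0 : x' = 0 := by
          let φ : (Fin N → ℝ) →ₗ[ℝ] ℝ :=
            { toFun := fun v => ∑ b, v b * x' b
              map_add' := fun u v => by
                simp [add_mul, Finset.sum_add_distrib]
              map_smul' := fun c v => by
                simp [Finset.mul_sum, mul_assoc] }
          have hker : Submodule.span ℝ (Set.range H) ≤ LinearMap.ker φ := by
            rw [Submodule.span_le]
            rintro v ⟨i, rfl⟩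
            exact hdot i (List.mem_finRange i)
          rw [hspan] at hker
          funext k
          have := hker (Submodule.mem_top (x := Pi.single k (1:ℝ)))
          simpa [φ, Pi.single_apply, Finset.sum_ite_eq'] using this
        rw [hx0] at hnx
        simp at hnx
    rw [hnx] at hlt
    have hTnorm2 : ‖T x‖ ^ 2 = ∑ j, ((Φ₀ *ᵥ x') j) ^ 2 := by
      rw [EuclideanSpace.norm_eq]
      rw [Real.sq_sqrt (by positivity)]
      refine Finset.sum_congr rfl fun j _ => by
        rw [hTx j, Real.norm_eq_abs, sq_abs]
    nlinarith [norm_nonneg (T x)]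
  -- use compactness of the sphere to get a strict bound on the norm
  have hsphere : (Metric.sphere (0 : EuclideanSpace ℝ (Fin N)) 1).Nonempty := by
    have : Nontrivial (EuclideanSpace ℝ (Fin N)) := by
      have : Nonempty (Fin N) := ⟨⟨0, hN⟩⟩
      infer_instance
    exact NormedSpace.sphere_nonempty.mpr zero_le_one
  obtain ⟨x₀, hx₀mem, hx₀max⟩ := (isCompact_sphere (0 : EuclideanSpace ℝ (Fin N)) 1).exists_isMaxOn
    hsphere (Continuous.continuousOn (T.continuous.norm))
  have hx₀ : ‖x₀‖ = 1 := by
    rw [Metric.mem_sphere, dist_zero_right] at hx₀mem; exact hx₀mem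
  have hbound : ‖T‖ ≤ ‖T x₀‖ :=
    ContinuousLinearMap.opNorm_le_of_unit_norm (norm_nonneg _) fun x hx =>
      hx₀max (show x ∈ Metric.sphere (0 : EuclideanSpace ℝ (Fin N)) 1 by
        rw [Metric.mem_sphere, dist_zero_right]; exact hx)
  calc ‖Φ₀‖ = ‖T‖ := hnormT
    _ ≤ ‖T x₀‖ := hbound
    _ < 1 := key x₀ hx₀
end

section
/- Suppose a deterministic sequence of indices s(k) ∈ {1,...,N} contains each consecutive block of N steps in which all indices 1,...,N appear (e.g., cyclic selection), and H_1,...,H_N span ℝ^N with ‖H_i‖² < N. Then the iteration e(k+1) = (I − (1/N)H_{s(k)}ᵀH_{s(k)}) e(k) converges to 0 geometrically: ‖e(k)‖ ≤ ‖Φ₀‖^{⌊k/N⌋}·‖e(0)‖ for ‖Φ₀‖ = ‖∏_{i=1}^N(I − (1/N)H_iᵀH_i)‖ < 1. -/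
open Matrix
open scoped Matrix.Norms.L2Operator

namespace Stmt13Aux

variable {N : ℕ}

noncomputable def Mk (N : ℕ) (H : Fin N → (Fin N → ℝ)) (i : Fin N) :
    Matrix (Fin N) (Fin N) ℝ :=
  (1 : Matrix (Fin N) (Fin N) ℝ) - Matrix.of (fun a b => (1 / N : ℝ) * (H i a * H i b))

lemma Mk_mulVec (H : Fin N → (Fin N → ℝ)) (i : Fin N) (x : Fin N → ℝ) :
    Mk N H i *ᵥ x = x - ((1 / N : ℝ) * (∑ b, H i b * x b)) • H i := by
  funext a
  simp only [Mk, sub_mulVec, one_mulVec, Pi.sub_apply, Pi.smul_apply, smul_eq_mul]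
  congr 1
  simp only [mulVec, dotProduct, of_apply]
  rw [Finset.mul_sum, Finset.sum_mul]
  apply Finset.sum_congr rfl
  intro b _
  ring

lemma sq_sum_Mk (hN : 0 < N) (H : Fin N → (Fin N → ℝ))
    (hnorm : ∀ i, ∑ j, (H i j) ^ 2 < N) (i : Fin N) (x : Fin N → ℝ) :
    ∑ j, (Mk N H i *ᵥ x) j ^ 2 ≤ ∑ j, x j ^ 2 - (∑ b, H i b * x b) ^ 2 / N := by
  have hNpos : (0 : ℝ) < N := by exact_mod_cast hN
  set c : ℝ := ∑ b, H i b * x b with hc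
  set d : ℝ := (1 / N : ℝ) * c with hd
  have expand : ∑ j, (Mk N H i *ᵥ x) j ^ 2
      = ∑ j, x j ^ 2 - 2 * d * c + d ^ 2 * ∑ j, (H i j) ^ 2 := by
    rw [Mk_mulVec, ← hc, ← hd]
    have : ∀ j, (x - d • H i) j ^ 2 = x j ^ 2 - 2 * d * (H i j * x j) + d ^ 2 * H i j ^ 2 := by
      intro j; simp only [Pi.sub_apply, Pi.smul_apply, smul_eq_mul]; ring
    simp only [this]
    rw [Finset.sum_add_distrib, Finset.sum_sub_distrib, ← Finset.mul_sum, ← Finset.mul_sum, hc]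
  rw [expand]
  have hd' : d = c / N := by rw [hd]; ring
  have h1 : (∑ j, (H i j) ^ 2) / N < 1 := by
    rw [div_lt_one hNpos]; exact hnorm i
  have h2 : d ^ 2 * ∑ j, (H i j) ^ 2 ≤ c ^ 2 / N * ((∑ j, (H i j) ^ 2) / N) := by
    rw [hd']; rw [div_pow]; rw [sq (N:ℝ)]
    rw [div_mul_div_comm]
    apply le_of_eq; ring
  have h3 : c ^ 2 / N * ((∑ j, (H i j) ^ 2) / N) ≤ c ^ 2 / N * 1 := by
    apply mul_le_mul_of_nonneg_left h1.le (by positivity)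
  have h4 : 2 * d * c = 2 * (c ^ 2 / N) := by rw [hd']; ring
  nlinarith [h2, h3]

lemma sq_sum_Mk_le (hN : 0 < N) (H : Fin N → (Fin N → ℝ))
    (hnorm : ∀ i, ∑ j, (H i j) ^ 2 < N) (i : Fin N) (x : Fin N → ℝ) :
    ∑ j, (Mk N H i *ᵥ x) j ^ 2 ≤ ∑ j, x j ^ 2 := by
  have := sq_sum_Mk hN H hnorm i x
  have h0 : (0:ℝ) ≤ (∑ b, H i b * x b) ^ 2 / N := by positivity
  linarith

lemma sq_sum_Mk_eq (hN : 0 < N) (H : Fin N → (Fin N → ℝ))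
    (hnorm : ∀ i, ∑ j, (H i j) ^ 2 < N) (i : Fin N) (x : Fin N → ℝ)
    (heq : ∑ j, (Mk N H i *ᵥ x) j ^ 2 = ∑ j, x j ^ 2) :
    (∑ b, H i b * x b) = 0 ∧ Mk N H i *ᵥ x = x := by
  have hNpos : (0 : ℝ) < N := by exact_mod_cast hN
  have := sq_sum_Mk hN H hnorm i x
  have h0 : (∑ b, H i b * x b) ^ 2 / N ≤ 0 := by linarith
  have hc : (∑ b, H i b * x b) = 0 := by
    by_contra hne
    have : 0 < (∑ b, H i b * x b) ^ 2 / N := by positivity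
    linarith
  refine ⟨hc, ?_⟩
  rw [Mk_mulVec, hc, mul_zero, zero_smul, sub_zero]

/-- apply a list of factors -/
lemma list_le (hN : 0 < N) (H : Fin N → (Fin N → ℝ))
    (hnorm : ∀ i, ∑ j, (H i j) ^ 2 < N) :
    ∀ (l : List (Fin N)) (x : Fin N → ℝ),
      ∑ j, (((l.map (Mk N H)).prod) *ᵥ x) j ^ 2 ≤ ∑ j, x j ^ 2 := by
  intro l
  induction l with
  | nil => intro x; simp
  | cons i t ih =>
      intro x
      simp only [List.map_cons, List.prod_cons, ← Matrix.mulVec_mulVec]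
      calc ∑ j, (Mk N H i *ᵥ ((t.map (Mk N H)).prod *ᵥ x)) j ^ 2
          ≤ ∑ j, ((t.map (Mk N H)).prod *ᵥ x) j ^ 2 := sq_sum_Mk_le hN H hnorm i _
        _ ≤ ∑ j, x j ^ 2 := ih x

lemma list_eq (hN : 0 < N) (H : Fin N → (Fin N → ℝ))
    (hnorm : ∀ i, ∑ j, (H i j) ^ 2 < N) :
    ∀ (l : List (Fin N)) (x : Fin N → ℝ),
      (∑ j, (((l.map (Mk N H)).prod) *ᵥ x) j ^ 2 = ∑ j, x j ^ 2) →
      (∀ i ∈ l, ∑ b, H i b * x b = 0) ∧ ((l.map (Mk N H)).prod) *ᵥ x = x := by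
  intro l
  induction l with
  | nil =>
      intro x _
      exact ⟨fun i hi => absurd hi List.not_mem_nil, by simp⟩
  | cons i t ih =>
      intro x heq
      simp only [List.map_cons, List.prod_cons, ← Matrix.mulVec_mulVec] at heq ⊢
      have h1 : ∑ j, (Mk N H i *ᵥ ((t.map (Mk N H)).prod *ᵥ x)) j ^ 2
          ≤ ∑ j, ((t.map (Mk N H)).prod *ᵥ x) j ^ 2 := sq_sum_Mk_le hN H hnorm i _
      have h2 : ∑ j, ((t.map (Mk N H)).prod *ᵥ x) j ^ 2 ≤ ∑ j, x j ^ 2 :=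
        list_le hN H hnorm t x
      have h3 : ∑ j, ((t.map (Mk N H)).prod *ᵥ x) j ^ 2 = ∑ j, x j ^ 2 :=
        le_antisymm h2 (by linarith)
      obtain ⟨h4, h5⟩ := ih x h3
      rw [h5] at heq ⊢
      obtain ⟨h6, h7⟩ := sq_sum_Mk_eq hN H hnorm i x heq
      exact ⟨fun j hj => by
        rcases List.mem_cons.mp hj with h | h
        · exact h ▸ h6
        · exact h4 j h, h7⟩


lemma perp_zero (H : Fin N → (Fin N → ℝ)) (hspan : Submodule.span ℝ (Set.range H) = ⊤)
    (x : Fin N → ℝ) (hx : ∀ i, ∑ b, H i b * x b = 0) : x = 0 := by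
  let φ : (Fin N → ℝ) →ₗ[ℝ] ℝ :=
    { toFun := fun v => ∑ b, v b * x b
      map_add' := fun u v => by simp [add_mul, Finset.sum_add_distrib]
      map_smul' := fun c v => by simp [Finset.mul_sum, mul_assoc] }
  have hker : Submodule.span ℝ (Set.range H) ≤ LinearMap.ker φ := by
    rw [Submodule.span_le]
    rintro _ ⟨i, rfl⟩
    simpa [φ] using hx i
  have hx0 : φ x = 0 := by
    have hmem : x ∈ Submodule.span ℝ (Set.range H) := by rw [hspan]; trivial
    simpa using hker hmem
  have hsum : ∑ b, x b ^ 2 = 0 := by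
    have : ∑ b, x b * x b = 0 := hx0
    simpa [sq] using this
  funext b
  have hb := (Finset.sum_eq_zero_iff_of_nonneg (fun j _ => sq_nonneg (x j))).mp hsum b
    (Finset.mem_univ b)
  exact pow_eq_zero_iff (two_ne_zero) |>.mp hb

lemma enorm_sqrt (w : Fin N → ℝ) :
    ‖(WithLp.equiv 2 (Fin N → ℝ)).symm w‖ = Real.sqrt (∑ j, w j ^ 2) := by
  rw [EuclideanSpace.norm_eq]
  congr 1
  apply Finset.sum_congr rfl
  intro j _
  rw [show ((WithLp.equiv 2 (Fin N → ℝ)).symm w).ofLp j = w j from rfl, Real.norm_eq_abs, sq_abs]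

end Stmt13Aux

open Stmt13Aux

/-- Under cyclic selection `s(t) = t mod N`, with `H_1,...,H_N` spanning `ℝ^N` and
`‖H_i‖² < N`, the iteration `e(k+1) = (I − (1/N)H_{s(k)}ᵀH_{s(k)}) e(k)` converges
geometrically: `‖e(k)‖ ≤ ‖Φ₀‖^{⌊k/N⌋}·‖e(0)‖` with
`Φ₀ = ∏_{i=1}^N (I − (1/N)H_iᵀH_i)` satisfying `‖Φ₀‖ < 1`. -/
theorem stmt13 (N : ℕ) (hN : 0 < N) (H : Fin N → (Fin N → ℝ))
    (hspan : Submodule.span ℝ (Set.range H) = ⊤)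
    (hnorm : ∀ i, ∑ j, (H i j) ^ 2 < N)
    (s : ℕ → Fin N) (hs : ∀ t, s t = ⟨t % N, Nat.mod_lt t hN⟩)
    (e : ℕ → (Fin N → ℝ))
    (he : ∀ k, e (k + 1) =
      ((1 : Matrix (Fin N) (Fin N) ℝ) -
        Matrix.of (fun a b => (1 / N : ℝ) * (H (s k) a * H (s k) b))).mulVec (e k))
    (Φ₀ : Matrix (Fin N) (Fin N) ℝ)
    (hΦ₀ : Φ₀ = (((List.finRange N).reverse).map
        (fun i => (1 : Matrix (Fin N) (Fin N) ℝ) -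
          Matrix.of (fun a b => (1 / N : ℝ) * (H i a * H i b)))).prod) :
    ‖Φ₀‖ < 1 ∧
      ∀ k, Real.sqrt (∑ i, (e k i) ^ 2) ≤
        ‖Φ₀‖ ^ (k / N) * Real.sqrt (∑ i, (e 0 i) ^ 2) := by
  classical
  haveI : Nonempty (Fin N) := ⟨⟨0, hN⟩⟩
  set M : Fin N → Matrix (Fin N) (Fin N) ℝ := Mk N H with hMdef
  have hΦ : Φ₀ = (((List.finRange N).reverse).map M).prod := hΦ₀
  have hstep : ∀ k, e (k + 1) = M (s k) *ᵥ e k := he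
  -- Part 1 : ‖Φ₀‖ < 1
  set T := (Matrix.toEuclideanLin.trans LinearMap.toContinuousLinearMap) Φ₀ with hT
  have hnormT : ‖Φ₀‖ = ‖T‖ := Matrix.l2_opNorm_def Φ₀
  have hTapp : ∀ x : EuclideanSpace ℝ (Fin N),
      ‖T x‖ = Real.sqrt (∑ j, (Φ₀ *ᵥ (WithLp.equiv 2 (Fin N → ℝ) x)) j ^ 2) := by
    intro x
    have : T x = (WithLp.equiv 2 (Fin N → ℝ)).symm (Φ₀ *ᵥ (WithLp.equiv 2 (Fin N → ℝ) x)) := rfl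
    rw [this, enorm_sqrt]
  obtain ⟨x₀, hx₀mem, hx₀max⟩ :=
    (isCompact_sphere (0 : EuclideanSpace ℝ (Fin N)) 1).exists_isMaxOn
      (NormedSpace.sphere_nonempty.mpr zero_le_one)
      (T.continuous.norm.continuousOn)
  have hx₀norm : ‖x₀‖ = 1 := by
    simpa using mem_sphere_zero_iff_norm.mp hx₀mem
  set v₀ : Fin N → ℝ := WithLp.equiv 2 (Fin N → ℝ) x₀ with hv₀
  have hx₀v : (WithLp.equiv 2 (Fin N → ℝ)).symm v₀ = x₀ := rfl
  have hQv₀ : ∑ j, v₀ j ^ 2 = 1 := by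
    have h1 : Real.sqrt (∑ j, v₀ j ^ 2) = 1 := by
      rw [← enorm_sqrt, hx₀v, hx₀norm]
    nlinarith [Real.sq_sqrt (show (0:ℝ) ≤ ∑ j, v₀ j ^ 2 by positivity), h1]
  have hQlt : ∑ j, (Φ₀ *ᵥ v₀) j ^ 2 < 1 := by
    have hle : ∑ j, (Φ₀ *ᵥ v₀) j ^ 2 ≤ 1 := by
      have h := list_le hN H hnorm ((List.finRange N).reverse) v₀
      rw [← hΦ, hQv₀] at h
      exact h
    rcases lt_or_eq_of_le hle with h | h
    · exact h
    · exfalso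
      have heq : ∑ j, ((((List.finRange N).reverse.map M).prod) *ᵥ v₀) j ^ 2
          = ∑ j, v₀ j ^ 2 := by rw [← hΦ, h, hQv₀]
      have hperp := (list_eq hN H hnorm _ v₀ heq).1
      have hz : v₀ = 0 := perp_zero H hspan v₀ (fun i => hperp i (by simp))
      rw [hz] at hQv₀
      simp at hQv₀
  have hΦlt : ‖Φ₀‖ < 1 := by
    rw [hnormT]
    have h1 : ‖T‖ ≤ ‖T x₀‖ := by
      apply ContinuousLinearMap.opNorm_le_of_unit_norm (norm_nonneg _)
      intro x hx
      exact hx₀max (mem_sphere_zero_iff_norm.mpr hx)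
    have h2 : ‖T x₀‖ < 1 := by
      rw [hTapp, ← hv₀]
      rw [show (1:ℝ) = Real.sqrt 1 by simp]
      exact Real.sqrt_lt_sqrt (by positivity) hQlt
    linarith
  -- Part 2
  have hΦnonneg : (0:ℝ) ≤ ‖Φ₀‖ := norm_nonneg _
  have hmulVec_le : ∀ v : Fin N → ℝ,
      Real.sqrt (∑ j, (Φ₀ *ᵥ v) j ^ 2) ≤ ‖Φ₀‖ * Real.sqrt (∑ j, v j ^ 2) := by
    intro v
    have h1 := Matrix.l2_opNorm_mulVec Φ₀ ((WithLp.equiv 2 (Fin N → ℝ)).symm v)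
    have e1 : (EuclideanSpace.equiv (Fin N) ℝ).symm
        (Φ₀ *ᵥ ((WithLp.equiv 2 (Fin N → ℝ)).symm v))
        = (WithLp.equiv 2 (Fin N → ℝ)).symm (Φ₀ *ᵥ v) := rfl
    rw [e1, enorm_sqrt, enorm_sqrt] at h1
    exact h1
  have htake : ∀ q : ℕ, ∀ j, j ≤ N →
      e (q * N + j) = ((((List.finRange N).take j).reverse.map M).prod) *ᵥ e (q * N) := by
    intro q j
    induction j with
    | zero => intro _; simp
    | succ j ih =>
        intro hj
        have hjN : j < N := hj
        have h1 : e (q * N + (j + 1)) = M (s (q * N + j)) *ᵥ e (q * N + j) := by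
          rw [← Nat.add_assoc]
          exact hstep (q * N + j)
        have hsval : s (q * N + j) = ⟨j, hjN⟩ := by
          rw [hs]
          congr 1
          rw [Nat.mul_comm, Nat.mul_add_mod, Nat.mod_eq_of_lt hjN]
        have htk : (List.finRange N).take (j + 1)
            = (List.finRange N).take j ++ [⟨j, hjN⟩] := by
          rw [List.take_succ]
          congr 1
          simp [List.getElem?_eq_getElem, List.length_finRange, hjN, List.getElem_finRange]
        rw [h1, hsval, ih (le_of_lt hjN), htk]
        rw [List.reverse_append]
        simp [Matrix.mulVec_mulVec]
  have hblockN : ∀ q, e (q * N + N) = Φ₀ *ᵥ e (q * N) := by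
    intro q
    have h := htake q N le_rfl
    rwa [List.take_of_length_le (by simp), ← hΦ] at h
  have hpow : ∀ q, Real.sqrt (∑ i, (e (q * N) i) ^ 2)
      ≤ ‖Φ₀‖ ^ q * Real.sqrt (∑ i, (e 0 i) ^ 2) := by
    intro q
    induction q with
    | zero => simp
    | succ q ih =>
        have h1 : (q + 1) * N = q * N + N := by ring
        rw [h1, hblockN q]
        calc Real.sqrt (∑ i, (Φ₀ *ᵥ e (q * N)) i ^ 2)
            ≤ ‖Φ₀‖ * Real.sqrt (∑ i, (e (q * N) i) ^ 2) := hmulVec_le _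
          _ ≤ ‖Φ₀‖ * (‖Φ₀‖ ^ q * Real.sqrt (∑ i, (e 0 i) ^ 2)) :=
              mul_le_mul_of_nonneg_left ih hΦnonneg
          _ = ‖Φ₀‖ ^ (q + 1) * Real.sqrt (∑ i, (e 0 i) ^ 2) := by ring
  refine ⟨hΦlt, fun k => ?_⟩
  set q := k / N with hq
  set r := k % N with hr
  have hkqr : k = q * N + r := by
    rw [hq, hr]; exact (Nat.div_add_mod' k N).symm
  have hek : e k = ((((List.finRange N).take r).reverse.map M).prod) *ᵥ e (q * N) := by
    conv_lhs => rw [hkqr]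
    exact htake q r (le_of_lt (Nat.mod_lt k hN))
  rw [hek]
  calc Real.sqrt (∑ i, (((((List.finRange N).take r).reverse.map M).prod) *ᵥ e (q * N)) i ^ 2)
      ≤ Real.sqrt (∑ i, (e (q * N) i) ^ 2) :=
        Real.sqrt_le_sqrt (list_le hN H hnorm _ _)
    _ ≤ ‖Φ₀‖ ^ q * Real.sqrt (∑ i, (e 0 i) ^ 2) := hpow q
end
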